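/- arXiv:2508.18280 — 4 statements merged into one kernel-verified Lean document; each statement's English description precedes it below -/
import Mathlib

section
/- Let q ≥ 1, x_1,…,x_q ∈ ℂ, and 1 ≤ r < q. Then ∑_{s=1}^{q} (-1)^{s-1} ∑_{1 ≤ k_1 < ⋯ < k_s ≤ q} ∑_{j_{k_1},…,j_{k_s} ≥ 0, j_{k_1}+⋯+j_{k_s} = r} ( (2r)! / ((2j_{k_1})! ⋯ (2j_{k_s})!) ) · x_{k_1}^{j_{k_1}} ⋯ x_{k_s}^{j_{k_s}} = 0. -/
/-!
Exchange the order of summation. A tuple `j` with `∑ j = r` and support `S` occurs in the inner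
sum exactly for the sets `A ⊇ S`, and its term does not depend on `A`, since every factor with
`j k = 0` equals `1`. Its total coefficient is therefore `∑_{S ⊆ A} (-1)^(|A|-1)`, an alternating sum
over the interval `[S, univ]` of the Boolean lattice, which vanishes because `S` is a proper subset
(`1 ≤ |S| ≤ r < q`).
-/

open Finset

namespace Finset

theorem card_filter_ne_zero_le_sum {ι : Type*} (s : Finset ι) (f : ι → ℕ) :
    #{i ∈ s | f i ≠ 0} ≤ ∑ i ∈ s, f i :=
  calc #{i ∈ s | f i ≠ 0} = ∑ i ∈ s with f i ≠ 0, 1 := card_eq_sum_ones _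
    _ ≤ ∑ i ∈ s with f i ≠ 0, f i :=
      sum_le_sum fun _ hi => Nat.one_le_iff_ne_zero.2 (mem_filter.1 hi).2
    _ = ∑ i ∈ s, f i := sum_filter_ne_zero s

section piAntidiag

variable {ι μ : Type*} [DecidableEq ι] [AddCommMonoid μ] [HasAntidiagonal μ] [DecidableEq μ]
  {s : Finset ι} {n : μ} {f : ι → μ}

theorem nonempty_of_mem_piAntidiag (hf : f ∈ piAntidiag s n) (hn : n ≠ 0) : s.Nonempty :=
  nonempty_iff_ne_empty.2 fun hs => by simp [hs, hn] at hf

variable [Fintype ι]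

theorem mem_piAntidiag_iff_filter_ne_zero_subset :
    f ∈ piAntidiag s n ↔ ({i | f i ≠ 0} : Finset ι) ⊆ s ∧ f ∈ piAntidiag univ n := by
  simp only [mem_piAntidiag, mem_univ, implies_true, and_true, subset_iff, mem_filter, true_and]
  exact ⟨fun ⟨hsum, hsupp⟩ => ⟨hsupp, hsum ▸ (Fintype.sum_subset hsupp).symm⟩,
    fun ⟨hsupp, hsum⟩ => ⟨hsum ▸ Fintype.sum_subset hsupp, hsupp⟩⟩

theorem prod_eq_prod_univ_of_mem_piAntidiag {M : Type*} [CommMonoid M] (hf : f ∈ piAntidiag s n)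
    (g : ι → μ → M) (hg : ∀ i, g i 0 = 1) :
    ∏ i ∈ s, g i (f i) = ∏ i, g i (f i) :=
  prod_subset (subset_univ s) fun i _ hi => by
    rw [show f i = 0 from not_imp_comm.1 ((mem_piAntidiag.1 hf).2 i) hi, hg]

end piAntidiag

variable {ι R : Type*} [DecidableEq ι] [CommRing R]

theorem sum_superset_neg_one_pow_card {s t : Finset ι} (hst : s ⊂ t) :
    ∑ u ∈ t.powerset with s ⊆ u, (-1 : R) ^ #u = 0 := by
  have hdisj : ∀ u ∈ (t \ s).powerset, Disjoint s u := fun u hu =>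
    disjoint_of_subset_right (mem_powerset.1 hu) disjoint_sdiff
  rw [← Icc_eq_filter_powerset, Icc_eq_image_powerset hst.subset, sum_image fun u hu v hv huv => by
    rw [← union_sdiff_cancel_left (hdisj u hu), huv, union_sdiff_cancel_left (hdisj v hv)]]
  calc ∑ u ∈ (t \ s).powerset, (-1 : R) ^ #(s ∪ u)
      = (-1 : R) ^ #s * ((∑ u ∈ (t \ s).powerset, (-1 : ℤ) ^ #u : ℤ) : R) := by
        push_cast
        rw [mul_sum]
        exact sum_congr rfl fun u hu => by rw [card_union_of_disjoint (hdisj u hu), pow_add]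
    _ = 0 := by
      rw [sum_powerset_neg_one_pow_card_of_nonempty (sdiff_nonempty.2 hst.not_subset),
        Int.cast_zero, mul_zero]

theorem sum_nonempty_neg_one_pow_mul_sum_piAntidiag [Fintype ι] {n : ℕ} (hn : n ≠ 0)
    (hnι : n < Fintype.card ι) (F : (ι → ℕ) → R) :
    ∑ A ∈ univ.powerset with A.Nonempty, (-1 : R) ^ (#A - 1) * ∑ f ∈ piAntidiag A n, F f = 0 := by
  simp_rw [mul_sum]
  rw [sum_comm' (t' := piAntidiag univ n)
    (s' := fun f => {A ∈ univ.powerset | ({i | f i ≠ 0} : Finset ι) ⊆ A})]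
  · refine sum_eq_zero fun f hf => ?_
    set S : Finset ι := {i | f i ≠ 0}
    have hS : S.Nonempty := nonempty_of_mem_piAntidiag
      (mem_piAntidiag_iff_filter_ne_zero_subset.2 ⟨subset_rfl, hf⟩) hn
    have hSuniv : S ⊂ univ := by
      refine ssubset_univ_iff.2 fun hS => hnι.not_ge ?_
      calc Fintype.card ι = #S := by rw [hS, card_univ]
        _ ≤ n := (mem_piAntidiag.1 hf).1 ▸ card_filter_ne_zero_le_sum univ f
    have hsign : ∑ A ∈ univ.powerset with S ⊆ A, (-1 : R) ^ (#A - 1) = 0 := by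
      rw [← neg_eq_zero, ← sum_neg_distrib, ← sum_superset_neg_one_pow_card (R := R) hSuniv]
      refine sum_congr rfl fun A hA => ?_
      obtain ⟨k, hk⟩ :=
        Nat.exists_eq_add_one_of_ne_zero (hS.mono (mem_filter.1 hA).2).card_ne_zero
      rw [hk, pow_succ, Nat.add_sub_cancel, mul_neg_one]
    rw [← sum_mul, hsign, zero_mul]
  · intro A f
    rw [mem_filter, mem_filter, mem_piAntidiag_iff_filter_ne_zero_subset]
    refine ⟨fun ⟨⟨hA, _⟩, hsupp, hf⟩ => ⟨⟨hA, hsupp⟩, hf⟩, fun ⟨⟨hA, hsupp⟩, hf⟩ => ?_⟩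
    have hfA := mem_piAntidiag_iff_filter_ne_zero_subset.2 ⟨hsupp, hf⟩
    exact ⟨⟨hA, nonempty_of_mem_piAntidiag hfA hn⟩, hsupp, hf⟩

end Finset

theorem stmt_0_general (q r : ℕ) (hr : 1 ≤ r) (hrq : r < q) (x : Fin q → ℂ) :
    ∑ A ∈ (Finset.univ : Finset (Fin q)).powerset.filter (fun A => A.Nonempty),
      (-1 : ℂ) ^ (A.card - 1) *
        ∑ j ∈ Finset.piAntidiag A r,
          (((2 * r).factorial : ℂ) / ∏ k ∈ A, ((2 * j k).factorial : ℂ)) *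
            ∏ k ∈ A, x k ^ (j k) = 0 := by
  have hterm : ∀ A : Finset (Fin q), ∀ j ∈ piAntidiag A r,
      (((2 * r).factorial : ℂ) / ∏ k ∈ A, ((2 * j k).factorial : ℂ)) * ∏ k ∈ A, x k ^ (j k) =
        (((2 * r).factorial : ℂ) / ∏ k, ((2 * j k).factorial : ℂ)) * ∏ k, x k ^ (j k) :=
    fun A j hj => congrArg₂ (fun P Q => ((2 * r).factorial : ℂ) / P * Q)
      (prod_eq_prod_univ_of_mem_piAntidiag hj (fun _ m => ((2 * m).factorial : ℂ)) (by simp))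
      (prod_eq_prod_univ_of_mem_piAntidiag hj (fun k m => x k ^ m) (by simp))
  rw [sum_congr rfl fun A _ => by rw [sum_congr rfl (hterm A)]]
  exact sum_nonempty_neg_one_pow_mul_sum_piAntidiag (by omega) (by simpa using hrq) _

/-- Lemma 1 (Ford–Zaharescu generalization): the alternating multinomial identity. -/
theorem stmt_0 (q r : ℕ) (hq : 1 ≤ q) (hr : 1 ≤ r) (hrq : r < q) (x : Fin q → ℂ) :
    ∑ A ∈ (Finset.univ : Finset (Fin q)).powerset.filter (fun A => A.Nonempty),
      (-1 : ℂ) ^ (A.card - 1) *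
        ∑ j ∈ Finset.piAntidiag A r,
          (((2 * r).factorial : ℂ) / ∏ k ∈ A, ((2 * j k).factorial : ℂ)) *
            ∏ k ∈ A, x k ^ (j k) = 0 :=
  stmt_0_general q r hr hrq x
end

section
/- Let q ≥ 2, α_1,…,α_q ∈ ℂ, and 1 ≤ r < q. Then ∑_{s=1}^{q} 2^{q-s} (-1)^{s-1} ∑_{1 ≤ k_1 < ⋯ < k_s ≤ q} ∑_{ε_2,…,ε_s ∈ {-1,+1}} (α_{k_1} + ε_2 α_{k_2} + ⋯ + ε_s α_{k_s})^{2r} = 0. -/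
/-!
Each factor of `G(x) = ∏ₖ (2 - e^{αₖ x} - e^{-αₖ x})` is `O(x²)`, so `G` is divisible by `x^{2q}`.
Expanding the product over subsets `S` and sign vectors `ε` shows that the coefficient of `xⁿ` in `G`
is `∑_S 2^{q-|S|} (-1)^{|S|} ∑_ε (∑_{k ∈ S} εₖ αₖ)ⁿ / n!`, which therefore vanishes for `n < 2q`.
For even `n` flipping all signs fixes each summand, so fixing the sign of the least index of `S`
halves the inner sum; the empty set contributes `0ⁿ = 0` once `n ≥ 1`.
-/

open Finset PowerSeries

namespace Finset

variable {ι M : Type*} [DecidableEq ι] [AddCommMonoid M]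

theorem sum_pi_insert {β : ι → Type*} [∀ a, DecidableEq (β a)] {s : Finset ι}
    {t : ∀ a, Finset (β a)} {a : ι} (ha : a ∉ s) (f : (∀ x ∈ insert a s, β x) → M) :
    ∑ p ∈ (insert a s).pi t, f p = ∑ b ∈ t a, ∑ p ∈ s.pi t, f (Pi.cons s a b p) := by
  have hdisj : (t a : Set (β a)).PairwiseDisjoint fun b => (s.pi t).image (Pi.cons s a b) := by
    intro x _ y _ hxy
    simp only [Function.onFun, disjoint_iff_ne, mem_image]
    rintro _ ⟨p, _, rfl⟩ _ ⟨p', _, rfl⟩ h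
    exact hxy (by simpa using congr_fun₂ h a (mem_insert_self a s))
  rw [pi_insert ha, sum_biUnion hdisj]
  exact sum_congr rfl fun b _ => sum_image fun p _ p' _ h => Pi.cons_injective ha h

theorem sum_attach_insert_pi_cons {β : Type*} {s : Finset ι} {a : ι} (ha : a ∉ s) (b : β)
    (p : ∀ x ∈ s, β) (g : ι → β → M) :
    ∑ x ∈ (insert a s).attach, g x.1 (Pi.cons s a b p x.1 x.2)
      = g a b + ∑ x ∈ s.attach, g x.1 (p x.1 x.2) := by
  rw [attach_insert, sum_insert (by simpa using ha),
    sum_image fun _ _ _ _ h => Subtype.ext (Subtype.mk.inj h), Pi.cons_same]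
  congr 1
  exact sum_congr rfl fun x _ => by rw [Pi.cons_ne (ne_of_mem_of_not_mem x.2 ha).symm]

theorem sum_pi_signs_neg (s : Finset ι) (f : (∀ x ∈ s, ℤ) → M) :
    ∑ ε ∈ s.pi (fun _ => ({-1, 1} : Finset ℤ)), f (fun x hx => -ε x hx)
      = ∑ ε ∈ s.pi (fun _ => ({-1, 1} : Finset ℤ)), f ε := by
  have hneg : ∀ ε ∈ s.pi (fun _ => ({-1, 1} : Finset ℤ)),
      (fun x hx => -ε x hx) ∈ s.pi (fun _ => ({-1, 1} : Finset ℤ)) := by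
    intro ε hε
    simp only [mem_pi, mem_insert, mem_singleton] at hε ⊢
    intro x hx
    rcases hε x hx with h | h <;> simp [h]
  exact sum_nbij' (fun ε x hx => -ε x hx) (fun ε x hx => -ε x hx) hneg hneg
    (fun _ _ => by simp) (fun _ _ => by simp) (fun _ _ => rfl)

theorem sum_powerset_erase_empty_eq_sum_min [LinearOrder ι] (s : Finset ι) (f : Finset ι → M) :
    ∑ S ∈ s.powerset.erase ∅, f S
      = ∑ a ∈ s, ∑ B ∈ (s.filter (a < ·)).powerset, f (insert a B) := by
  have hmin : ∀ a (B : Finset ι), (∀ k ∈ B, a < k) → (insert a B).min' (insert_nonempty a B) = a :=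
    fun a B hB => le_antisymm (min'_le _ _ (mem_insert_self a B))
      (le_min' _ _ _ fun k hk => (mem_insert.1 hk).elim ge_of_eq fun h => (hB k h).le)
  rw [sum_sigma']
  symm
  refine sum_bij' (fun x _ => insert x.1 x.2)
    (fun S hS => ⟨S.min' (nonempty_iff_ne_empty.2 (ne_of_mem_erase hS)),
      S.erase (S.min' (nonempty_iff_ne_empty.2 (ne_of_mem_erase hS)))⟩) ?_ ?_ ?_ ?_ (fun _ _ => rfl)
  · rintro ⟨a, B⟩ h
    simp only [mem_sigma, mem_powerset] at h
    exact mem_erase.2 ⟨insert_ne_empty a B,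
      mem_powerset.2 (insert_subset h.1 (h.2.trans (filter_subset _ _)))⟩
  · intro S hS
    have hne := nonempty_iff_ne_empty.2 (ne_of_mem_erase hS)
    have hSs := mem_powerset.1 (mem_of_mem_erase hS)
    simp only [mem_sigma, mem_powerset, subset_iff, mem_filter]
    exact ⟨hSs (min'_mem S hne), fun k hk =>
      ⟨hSs (mem_of_mem_erase hk),
        (min'_le S k (mem_of_mem_erase hk)).lt_of_ne (ne_of_mem_erase hk).symm⟩⟩
  · rintro ⟨a, B⟩ h
    simp only [mem_sigma, mem_powerset, subset_iff, mem_filter] at h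
    have hB : ∀ k ∈ B, a < k := fun k hk => (h.2 hk).2
    simp only [hmin a B hB]
    rw [erase_insert fun ha => lt_irrefl a (hB a ha)]
  · intro S hS
    exact insert_erase (min'_mem S (nonempty_iff_ne_empty.2 (ne_of_mem_erase hS)))

end Finset

theorem sum_pi_signs_insert_pow {ι R : Type*} [DecidableEq ι] [CommRing R] {s : Finset ι} {a : ι}
    (ha : a ∉ s) (α : ι → R) {n : ℕ} (hn : Even n) :
    ∑ ε ∈ (insert a s).pi (fun _ => ({-1, 1} : Finset ℤ)),
        (∑ x ∈ (insert a s).attach, (ε x.1 x.2 : R) * α x.1) ^ n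
      = 2 * ∑ ε ∈ s.pi (fun _ => ({-1, 1} : Finset ℤ)),
        (α a + ∑ x ∈ s.attach, (ε x.1 x.2 : R) * α x.1) ^ n := by
  simp only [sum_pi_insert ha, sum_pair (by decide : (-1 : ℤ) ≠ 1),
    sum_attach_insert_pi_cons ha _ _ fun x (e : ℤ) => (e : R) * α x]
  rw [← sum_pi_signs_neg s]
  have hflip : ∀ ε : ∀ x ∈ s, ℤ,
      (((-1 : ℤ) : R) * α a + ∑ x ∈ s.attach, ((-ε x.1 x.2 : ℤ) : R) * α x.1) ^ n
        = (α a + ∑ x ∈ s.attach, (ε x.1 x.2 : R) * α x.1) ^ n := fun ε => by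
    rw [← hn.neg_pow]
    push_cast
    simp only [neg_mul, one_mul, sum_neg_distrib, neg_add, neg_neg]
  simp only [hflip, Int.cast_one, one_mul, two_mul]

namespace PowerSeries

variable {A : Type*} [CommRing A] [Algebra ℚ A]

theorem prod_rescale_exp {ι : Type*} (s : Finset ι) (c : ι → A) :
    ∏ i ∈ s, rescale (c i) (exp A) = rescale (∑ i ∈ s, c i) (exp A) := by
  induction s using Finset.cons_induction with
  | empty => simp [rescale_zero]
  | cons a s ha ih => rw [prod_cons, ih, sum_cons, exp_mul_exp_eq_exp_add]

theorem X_sq_dvd_two_sub_sum_signs_exp (c : A) :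
    X ^ 2 ∣ 2 - ∑ e ∈ ({-1, 1} : Finset ℤ), rescale ((e : A) * c) (exp A) := by
  rw [X_pow_dvd_iff]
  intro m hm
  rw [sum_pair (by decide : (-1 : ℤ) ≠ 1), ← map_ofNat C 2]
  simp only [map_sub, map_add, coeff_C, coeff_rescale, coeff_exp]
  interval_cases m
  · simp [one_add_one_eq_two]
  · simp

theorem prod_two_sub_sum_signs_exp {ι : Type*} [DecidableEq ι] (s : Finset ι) (α : ι → A) :
    ∏ k ∈ s, (2 - ∑ e ∈ ({-1, 1} : Finset ℤ), rescale ((e : A) * α k) (exp A))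
      = ∑ S ∈ s.powerset, C ((2 : A) ^ (#s - #S) * (-1) ^ #S) *
          ∑ ε ∈ S.pi (fun _ => ({-1, 1} : Finset ℤ)),
            rescale (∑ x ∈ S.attach, (ε x.1 x.2 : A) * α x.1) (exp A) := by
  simp only [sub_eq_neg_add, prod_add, prod_neg, prod_sum, prod_rescale_exp, prod_const]
  refine sum_congr rfl fun S hS => ?_
  rw [card_sdiff_of_subset (mem_powerset.1 hS), map_mul, map_pow, map_pow, map_neg, map_one,
    map_ofNat]
  ring

theorem sum_powerset_signed_pow_eq_zero {ι : Type*} [DecidableEq ι] (s : Finset ι) (α : ι → A)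
    {n : ℕ} (hn : n < 2 * #s) :
    ∑ S ∈ s.powerset, (2 : A) ^ (#s - #S) * (-1) ^ #S *
      ∑ ε ∈ S.pi (fun _ => ({-1, 1} : Finset ℤ)), (∑ x ∈ S.attach, (ε x.1 x.2 : A) * α x.1) ^ n
        = 0 := by
  have hdvd : X ^ (2 * #s) ∣
      ∏ k ∈ s, (2 - ∑ e ∈ ({-1, 1} : Finset ℤ), rescale ((e : A) * α k) (exp A)) := by
    rw [pow_mul, ← prod_const]
    exact prod_dvd_prod_of_dvd _ _ fun k _ => X_sq_dvd_two_sub_sum_signs_exp (α k)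
  have hcoeff := X_pow_dvd_iff.1 hdvd n hn
  simp only [prod_two_sub_sum_signs_exp, map_sum, coeff_C_mul, coeff_rescale, coeff_exp,
    ← sum_mul, ← mul_assoc] at hcoeff
  have hunit : IsUnit (algebraMap ℚ A (1 / n.factorial)) := (IsUnit.mk0 _ (by positivity)).map _
  exact hunit.mul_left_eq_zero.1 hcoeff

end PowerSeries

theorem sum_min_signed_pow_eq_zero {ι A : Type*} [LinearOrder ι] [CommRing A] [Algebra ℚ A]
    (s : Finset ι) (α : ι → A) {r : ℕ} (hr : 1 ≤ r) (hrs : r < #s) :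
    ∑ a ∈ s, ∑ B ∈ (s.filter (a < ·)).powerset, (2 : A) ^ (#s - (#B + 1)) * (-1) ^ #B *
      ∑ ε ∈ B.pi (fun _ => ({-1, 1} : Finset ℤ)),
        (α a + ∑ k ∈ B.attach, (ε k.1 k.2 : A) * α k.1) ^ (2 * r) = 0 := by
  have h := PowerSeries.sum_powerset_signed_pow_eq_zero s α (n := 2 * r) (by omega)
  rw [← add_sum_erase _ _ (empty_mem_powerset s), sum_powerset_erase_empty_eq_sum_min] at h
  have hinsert : ∀ a ∈ s, ∀ B ∈ (s.filter (a < ·)).powerset,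
      (2 : A) ^ (#s - #(insert a B)) * (-1) ^ #(insert a B) *
        ∑ ε ∈ (insert a B).pi (fun _ => ({-1, 1} : Finset ℤ)),
          (∑ k ∈ (insert a B).attach, (ε k.1 k.2 : A) * α k.1) ^ (2 * r)
      = -2 * ((2 : A) ^ (#s - (#B + 1)) * (-1) ^ #B *
        ∑ ε ∈ B.pi (fun _ => ({-1, 1} : Finset ℤ)),
          (α a + ∑ k ∈ B.attach, (ε k.1 k.2 : A) * α k.1) ^ (2 * r)) := by
    intro a _ B hB
    have ha : a ∉ B := fun haB => lt_irrefl a (mem_filter.1 (mem_powerset.1 hB haB)).2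
    rw [card_insert_of_notMem ha, sum_pi_signs_insert_pow ha α (even_two_mul r)]
    ring
  have hunit : IsUnit (2 : A) :=
    map_ofNat (algebraMap ℚ A) 2 ▸ (IsUnit.mk0 (2 : ℚ) two_ne_zero).map (algebraMap ℚ A)
  simp only [sum_congr rfl fun a ha => sum_congr rfl (hinsert a ha), ← mul_sum, card_empty,
    pi_empty, sum_singleton, attach_empty, sum_empty, zero_pow (by omega : 2 * r ≠ 0), mul_zero,
    zero_add] at h
  exact hunit.neg.mul_right_eq_zero.1 h

-- A nonempty index set `{k₁ < ⋯ < kₛ}` is encoded by its least element `a = k₁` together with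
-- the set `B = {k₂, …, kₛ}` of the remaining indices.
theorem stmt_1_general (q r : ℕ) (hr : 1 ≤ r) (hrq : r < q) (α : Fin q → ℂ) :
    ∑ a : Fin q, ∑ B ∈ (Finset.univ.filter (fun k : Fin q => a < k)).powerset,
      (2 : ℂ) ^ (q - (B.card + 1)) * (-1) ^ B.card *
        ∑ ε ∈ B.pi (fun _ => ({-1, 1} : Finset ℤ)),
          (α a + ∑ k ∈ B.attach, (ε k.1 k.2 : ℂ) * α k.1) ^ (2 * r) = 0 := by
  simpa using sum_min_signed_pow_eq_zero univ α hr (by simpa using hrq)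

/-- Lemma 2: alternating sum over signed combinations of the `α`'s raised to the `2r` power
vanishes.  A nonempty index set `{k_1 < ⋯ < k_s}` is encoded by its least element `a = k_1`
together with the set `B = {k_2, …, k_s}` of remaining (larger) indices. -/
theorem stmt_1 (q r : ℕ) (hq : 2 ≤ q) (hr : 1 ≤ r) (hrq : r < q) (α : Fin q → ℂ) :
    ∑ a : Fin q, ∑ B ∈ (Finset.univ.filter (fun k : Fin q => a < k)).powerset,
      (2 : ℂ) ^ (q - (B.card + 1)) * (-1) ^ B.card *
        ∑ ε ∈ B.pi (fun _ => ({-1, 1} : Finset ℤ)),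
          (α a + ∑ k ∈ B.attach, (ε k.1 k.2 : ℂ) * α k.1) ^ (2 * r) = 0 :=
  stmt_1_general q r hr hrq α
end

section
/- For every integer n ≥ 1, the Laplace transform of sin^{2n} t equals (2n)! / (s (s²+2²)(s²+4²)⋯(s²+(2n)²)) for all real s > 0; that is, ∫_0^∞ e^{-st} sin^{2n} t dt = (2n)! / (s ∏_{k=1}^{n}(s² + (2k)²)). -/
/-!
Integrating by parts twice gives the recurrence
`(s² + (m+2)²) ∫ e^{-st} sin^{m+2} t dt = (m+2)(m+1) ∫ e^{-st} sin^m t dt`;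
starting from `∫ e^{-st} dt = 1/s`, it produces the factorial in the numerator and one factor
`s² + (2k)²` of the denominator per step. The two integrations by parts are packaged into the
single primitive `e^{-st} (s sin^{m+2} t + (m+2) sin^{m+1} t cos t)`, which vanishes at `0` and
at `∞`.
-/

open Finset MeasureTheory Filter Topology Set Real

lemma integrableOn_exp_neg_mul_mul_sin_pow {s : ℝ} (hs : 0 < s) (m : ℕ) :
    IntegrableOn (fun t => exp (-(s * t)) * sin t ^ m) (Ioi 0) := by
  refine ((exp_neg_integrableOn_Ioi 0 hs).congr_fun (fun t _ => by rw [neg_mul])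
    measurableSet_Ioi).mono' (by fun_prop) (Eventually.of_forall fun t => ?_)
  rw [norm_mul, norm_pow, Real.norm_eq_abs, Real.abs_exp]
  exact mul_le_of_le_one_right (exp_pos _).le (pow_le_one₀ (abs_nonneg _) (abs_sin_le_one t))

lemma tendsto_exp_neg_mul_mul_atTop_of_abs_le {s C : ℝ} (hs : 0 < s) {g : ℝ → ℝ}
    (hg : ∀ t, |g t| ≤ C) : Tendsto (fun t => exp (-(s * t)) * g t) atTop (𝓝 0) := by
  have hexp : Tendsto (fun t => exp (-(s * t))) atTop (𝓝 0) :=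
    tendsto_exp_atBot.comp (tendsto_neg_atTop_atBot.comp (tendsto_id.const_mul_atTop hs))
  exact hexp.zero_mul_isBoundedUnder_le (isBoundedUnder_of ⟨C, fun t => hg t⟩)

lemma integral_exp_neg_mul_mul_sin_pow_zero {s : ℝ} (hs : 0 < s) :
    ∫ t in Ioi 0, exp (-(s * t)) * sin t ^ 0 = 1 / s := by
  simp_rw [pow_zero, mul_one, ← neg_mul]
  rw [integral_exp_mul_Ioi (neg_lt_zero.mpr hs), mul_zero, exp_zero]
  ring

lemma hasDerivAt_exp_neg_mul_mul_sin_pow (s : ℝ) (m : ℕ) (t : ℝ) :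
    HasDerivAt
      (fun t => exp (-(s * t)) * (s * sin t ^ (m + 2) + ((m : ℝ) + 2) * sin t ^ (m + 1) * cos t))
      (((m : ℝ) + 2) * (m + 1) * (exp (-(s * t)) * sin t ^ m) -
        (s ^ 2 + (m + 2) ^ 2) * (exp (-(s * t)) * sin t ^ (m + 2))) t := by
  have hexp : HasDerivAt (fun t => exp (-(s * t))) (exp (-(s * t)) * -s) t := by
    simpa using (((hasDerivAt_id t).const_mul s).neg).exp
  have hsin := hasDerivAt_sin t
  refine (hexp.mul (((hsin.pow (m + 2)).const_mul s).add
    (((hsin.pow (m + 1)).const_mul ((m : ℝ) + 2)).mul (hasDerivAt_cos t)))).congr_deriv ?_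
  simp only [Pi.add_apply, Pi.mul_apply, Pi.pow_apply]
  push_cast
  linear_combination (((m : ℝ) + 2) * (m + 1) * exp (-(s * t)) * sin t ^ m) * sin_sq_add_cos_sq t

lemma integral_exp_neg_mul_mul_sin_pow_add_two {s : ℝ} (hs : 0 < s) (m : ℕ) :
    (s ^ 2 + (m + 2) ^ 2) * ∫ t in Ioi 0, exp (-(s * t)) * sin t ^ (m + 2) =
      (m + 2) * (m + 1) * ∫ t in Ioi 0, exp (-(s * t)) * sin t ^ m := by
  have hbound : ∀ t, |s * sin t ^ (m + 2) + (m + 2) * sin t ^ (m + 1) * cos t| ≤ s + (m + 2) := by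
    intro t
    have hpow : ∀ k : ℕ, |sin t ^ k| ≤ 1 := fun k => by
      rw [abs_pow]; exact pow_le_one₀ (abs_nonneg _) (abs_sin_le_one t)
    refine (abs_add_le _ _).trans (add_le_add ?_ ?_) <;> simp only [abs_mul]
    · rw [abs_of_pos hs]; exact mul_le_of_le_one_right hs.le (hpow _)
    · rw [abs_of_pos (by positivity : (0 : ℝ) < m + 2), mul_assoc]
      exact mul_le_of_le_one_right (by positivity)
        (mul_le_one₀ (hpow _) (abs_nonneg _) (abs_cos_le_one t))
  have hm := (integrableOn_exp_neg_mul_mul_sin_pow hs m).const_mul (((m : ℝ) + 2) * (m + 1))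
  have hm2 := (integrableOn_exp_neg_mul_mul_sin_pow hs (m + 2)).const_mul (s ^ 2 + (m + 2) ^ 2)
  have key := integral_Ioi_of_hasDerivAt_of_tendsto'
    (fun t _ => hasDerivAt_exp_neg_mul_mul_sin_pow s m t) (hm.sub hm2)
    (tendsto_exp_neg_mul_mul_atTop_of_abs_le hs hbound)
  rw [integral_sub hm hm2, integral_const_mul, integral_const_mul] at key
  simp only [mul_zero, neg_zero, exp_zero, sin_zero, ne_eq, Nat.add_eq_zero_iff,
    OfNat.ofNat_ne_zero, and_false, not_false_eq_true, zero_pow, one_ne_zero, cos_zero, mul_one,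
    add_zero, sub_self] at key
  linear_combination -key

theorem stmt_4_general (n : ℕ) (s : ℝ) (hs : 0 < s) :
    (∫ t in Set.Ioi (0 : ℝ), Real.exp (-(s * t)) * Real.sin t ^ (2 * n)) =
      ((2 * n).factorial : ℝ) /
        (s * ∏ k ∈ Finset.Icc 1 n, (s ^ 2 + ((2 * k : ℕ) : ℝ) ^ 2)) := by
  induction n with
  | zero => simpa using integral_exp_neg_mul_mul_sin_pow_zero hs
  | succ n ih =>
    have hrec := integral_exp_neg_mul_mul_sin_pow_add_two hs (2 * n)
    have hD : s ^ 2 + ((2 * n : ℕ) + 2 : ℝ) ^ 2 ≠ 0 := by positivity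
    rw [ih, mul_comm, ← eq_div_iff hD] at hrec
    rw [mul_add_one, hrec, prod_Icc_succ_top (by omega), Nat.factorial_succ, Nat.factorial_succ]
    have hprod : ∏ k ∈ Icc 1 n, (s ^ 2 + ((2 * k : ℕ) : ℝ) ^ 2) ≠ 0 :=
      prod_ne_zero_iff.mpr fun k _ => by positivity
    push_cast at hD ⊢
    field_simp
    ring

/-- The Laplace transform of `sin^{2n}`. -/
theorem stmt_4 (n : ℕ) (hn : 1 ≤ n) (s : ℝ) (hs : 0 < s) :
    (∫ t in Set.Ioi (0 : ℝ), Real.exp (-(s * t)) * Real.sin t ^ (2 * n)) =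
      ((2 * n).factorial : ℝ) /
        (s * ∏ k ∈ Finset.Icc 1 n, (s ^ 2 + ((2 * k : ℕ) : ℝ) ^ 2)) :=
  stmt_4_general n s hs
end

section
/- For every integer m ≥ 1 and every complex s with Re(s) > 1, ∑_{n=1}^{∞} Λ(n)^m / n^s = ∑_{δ=1}^{∞} b_m(δ) G_m(δ s), where b_m(k) = ∑_{d | k} μ(d) d^{m-1} and G_m(s) = ∑_{n=1}^{∞} Λ(n)(log n)^{m-1} / n^s, and all series converge absolutely. -/
/-!
Group the double series `∑_{δ,k} b_m(δ) Λ(k) (log k)^{m-1} k^{-δs}` according to `n = k^δ`.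
If `n = p^a`, only the pairs `(δ, p^{a/δ})` with `δ ∣ a` contribute, giving
`(log p)^m ∑_{δ ∣ a} b_m(δ) (a/δ)^{m-1}`. This sum is `1`: we have `b_m = (μ·Id^{m-1}) ∗ ζ`, and
pointwise multiplication by the completely multiplicative `Id^{m-1}` commutes with Dirichlet
convolution, so `b_m ∗ Id^{m-1} = ((μ ∗ ζ)·Id^{m-1}) ∗ ζ = ζ`. For absolute convergence, use
`|b_m(δ)| ≤ δ^m` and, for `k ≥ 2`, `k^{-δσ} ≤ 2^{σ(1-δ)} k^{-σ}`. Then the double series is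
dominated by the product of `∑ δ^m 2^{-δσ}` and `G_m(σ)`.
-/

open ArithmeticFunction

/-- `b_m(k) = ∑_{d ∣ k} μ(d) d^{m-1}`, as a complex number. -/
noncomputable def bFun (m k : ℕ) : ℂ :=
  ∑ d ∈ k.divisors, (ArithmeticFunction.moebius d : ℂ) * (d : ℂ) ^ (m - 1)

/-- `G_m(s) = ∑ Λ(n) (log n)^{m-1} / n^s`. -/
noncomputable def GFun (m : ℕ) (s : ℂ) : ℂ :=
  ∑' n : ℕ, (ArithmeticFunction.vonMangoldt n : ℂ) * (Real.log n : ℂ) ^ (m - 1) / (n : ℂ) ^ s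

open scoped ArithmeticFunction.Moebius ArithmeticFunction.zeta

namespace ArithmeticFunction

variable {R : Type*} [CommSemiring R]

theorem pmul_pow_mul_pmul_pow (k : ℕ) (f g : ArithmeticFunction R) :
    f.pmul (pow k) * g.pmul (pow k) = (f * g).pmul (pow k) := by
  ext n
  simp only [pmul_apply, mul_apply, Finset.sum_mul]
  refine Finset.sum_congr rfl fun p hp => ?_
  obtain ⟨rfl, hn⟩ := Nat.mem_divisorsAntidiagonal.mp hp
  obtain ⟨h₁, h₂⟩ := mul_ne_zero_iff.mp hn
  simp only [natCoe_apply, pow_apply, h₁, h₂, hn, and_false, if_false, Nat.cast_mul,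
    mul_pow]
  ring

theorem one_pmul_pow (k : ℕ) : (1 : ArithmeticFunction R).pmul (pow k) = 1 := by
  ext n
  rcases eq_or_ne n 1 with rfl | hn
  · simp
  · simp [one_apply_ne hn]

end ArithmeticFunction

theorem bFun_eq_mul_zeta (m δ : ℕ) :
    bFun m δ = ((μ : ArithmeticFunction ℂ).pmul (pow (m - 1)) * ζ) δ := by
  rw [coe_mul_zeta_apply, bFun]
  refine Finset.sum_congr rfl fun d hd => ?_
  simp [(Nat.pos_of_mem_divisors hd).ne']

theorem sum_divisors_bFun_mul_pow {a : ℕ} (m : ℕ) (ha : a ≠ 0) :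
    ∑ δ ∈ a.divisors, bFun m δ * ((a / δ : ℕ) : ℂ) ^ (m - 1) = 1 := by
  have hconv : (μ : ArithmeticFunction ℂ).pmul (pow (m - 1)) * ζ * pow (m - 1) = ζ :=
    calc (μ : ArithmeticFunction ℂ).pmul (pow (m - 1)) * ζ * pow (m - 1)
        = (μ : ArithmeticFunction ℂ).pmul (pow (m - 1)) * (ζ : ArithmeticFunction ℂ).pmul
            (pow (m - 1)) * ζ := by rw [zeta_pmul, mul_right_comm]
      _ = ζ := by rw [pmul_pow_mul_pmul_pow, coe_moebius_mul_coe_zeta, one_pmul_pow, one_mul]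
  have := congrArg (· a) hconv
  simp only [mul_apply, natCoe_apply, zeta_apply_ne ha, Nat.cast_one] at this
  rw [← this, ← Nat.sum_divisorsAntidiagonal (fun x y => bFun m x * ((y : ℕ) : ℂ) ^ (m - 1))]
  refine Finset.sum_congr rfl fun p hp => ?_
  have hp2 : p.2 ≠ 0 := (Nat.snd_mem_divisors_of_mem_antidiagonal hp |> Nat.pos_of_mem_divisors).ne'
  simp [bFun_eq_mul_zeta, hp2]

theorem Nat.dvd_and_eq_of_pow_eq_prime_pow {q a k δ : ℕ} (hq : q.Prime) (hδ : δ ≠ 0)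
    (h : k ^ δ = q ^ a) :
    δ ∣ a ∧ k = q ^ (a / δ) := by
  obtain ⟨i, -, rfl⟩ := (Nat.dvd_prime_pow hq).mp (h ▸ dvd_pow_self k hδ)
  rw [← pow_mul, Nat.pow_right_injective hq.two_le |>.eq_iff] at h
  subst h
  exact ⟨dvd_mul_left δ i, by rw [Nat.mul_div_cancel i (Nat.pos_of_ne_zero hδ)]⟩

theorem tsum_fiber_pow_eq_vonMangoldt_pow {m : ℕ} (hm : 1 ≤ m) (n : ℕ) :
    ∑' p : (fun p : ℕ × ℕ => p.2 ^ p.1) ⁻¹' {n},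
      bFun m p.1.1 * ((Λ p.1.2 : ℂ) * (Real.log p.1.2 : ℂ) ^ (m - 1)) = (Λ n : ℂ) ^ m := by
  set c : ℕ × ℕ → ℂ := fun p => bFun m p.1 * ((Λ p.2 : ℂ) * (Real.log p.2 : ℂ) ^ (m - 1))
  have hc (p : ℕ × ℕ) (hp : c p ≠ 0) : p.1 ≠ 0 ∧ IsPrimePow p.2 := by
    refine ⟨fun h => hp ?_, vonMangoldt_ne_zero_iff.mp fun h => hp ?_⟩ <;> simp [c, h, bFun]
  rw [tsum_subtype _ c]
  by_cases hn : IsPrimePow n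
  · obtain ⟨q, a, hq, ha, rfl⟩ := hn
    rw [← Nat.prime_iff] at hq
    let ι : ℕ ↪ ℕ × ℕ := ⟨fun δ => (δ, q ^ (a / δ)), fun _ _ h => congrArg Prod.fst h⟩
    rw [tsum_eq_sum (s := a.divisors.map ι), Finset.sum_map]
    · calc ∑ δ ∈ a.divisors, Set.indicator _ c (δ, q ^ (a / δ))
          = ∑ δ ∈ a.divisors, bFun m δ * ((a / δ : ℕ) : ℂ) ^ (m - 1) * (Real.log q : ℂ) ^ m := by
            refine Finset.sum_congr rfl fun δ hδ => ?_
            obtain ⟨hδa, -⟩ := Nat.mem_divisors.mp hδ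
            have hδ0 : a / δ ≠ 0 :=
              (Nat.div_pos (Nat.divisor_le hδ) (Nat.pos_of_mem_divisors hδ)).ne'
            rw [Set.indicator_of_mem (by simp [← pow_mul, Nat.div_mul_cancel hδa])]
            simp only [c, vonMangoldt_apply_pow hδ0, vonMangoldt_apply_prime hq, Nat.cast_pow,
              Real.log_pow, Complex.ofReal_mul, Complex.ofReal_natCast]
            rw [← mul_pow_sub_one (by omega : m ≠ 0)]
            ring
        _ = (Λ (q ^ a) : ℂ) ^ m := by
            rw [← Finset.sum_mul, sum_divisors_bFun_mul_pow m ha.ne', one_mul,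
              vonMangoldt_apply_pow ha.ne', vonMangoldt_apply_prime hq]
    · intro p hp
      refine Set.indicator_apply_eq_zero.mpr fun hpn => by_contra fun hcp => hp ?_
      obtain ⟨hδ, -⟩ := hc p hcp
      obtain ⟨hdvd, hk⟩ := Nat.dvd_and_eq_of_pow_eq_prime_pow hq hδ hpn
      exact Finset.mem_map.mpr ⟨p.1, Nat.mem_divisors.mpr ⟨hdvd, ha.ne'⟩, Prod.ext rfl hk.symm⟩
  · rw [vonMangoldt_eq_zero_iff.mpr hn, Complex.ofReal_zero, zero_pow (by omega)]
    refine (tsum_congr fun p => Set.indicator_apply_eq_zero.mpr fun hpn => ?_).trans tsum_zero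
    by_contra hcp
    obtain ⟨hδ, hk⟩ := hc p hcp
    exact hn (hpn ▸ hk.pow hδ)

section LSeries

open LSeries LSeries.notation

theorem LSeries.logMul_iterate_apply (f : ℕ → ℂ) (M n : ℕ) :
    logMul^[M] f n = Complex.log n ^ M * f n := by
  induction M with
  | zero => simp
  | succ M ih => rw [Function.iterate_succ_apply', logMul, ih]; ring

theorem summable_norm_vonMangoldt_mul_log_pow_div_cpow (M : ℕ) {w : ℂ} (hw : 1 < w.re) :
    Summable fun n : ℕ => ‖(Λ n : ℂ) * (Real.log n : ℂ) ^ M / (n : ℂ) ^ w‖ := by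
  have hΛ : abscissaOfAbsConv ↗Λ ≤ 1 :=
    abscissaOfAbsConv_le_of_forall_lt_LSeriesSummable fun y hy =>
      LSeriesSummable_vonMangoldt (by simpa using hy)
  have hlt : abscissaOfAbsConv (logMul^[M] ↗Λ) < w.re := by
    rw [absicssaOfAbsConv_logPowMul]
    exact hΛ.trans_lt (by exact_mod_cast hw)
  refine (LSeriesSummable_of_abscissaOfAbsConv_lt_re hlt).norm.congr fun n => ?_
  rcases eq_or_ne n 0 with rfl | hn
  · simp
  · rw [term_of_ne_zero hn, logMul_iterate_apply, Complex.natCast_log, mul_comm]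

end LSeries

theorem norm_vonMangoldt_pow_div_cpow_le {m : ℕ} (hm : 1 ≤ m) (w : ℂ) (n : ℕ) :
    ‖(Λ n : ℂ) ^ m / (n : ℂ) ^ w‖ ≤ ‖(Λ n : ℂ) * (Real.log n : ℂ) ^ (m - 1) / (n : ℂ) ^ w‖ := by
  have hΛ : Λ n ^ m ≤ Λ n * Real.log n ^ (m - 1) := by
    rw [← mul_pow_sub_one (by omega : m ≠ 0)]
    gcongr
    exact vonMangoldt_le_log
  rw [norm_div, norm_div, norm_mul, norm_pow, norm_pow, Complex.norm_real, Complex.norm_real,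
    Real.norm_of_nonneg vonMangoldt_nonneg, Real.norm_of_nonneg (Real.log_natCast_nonneg n)]
  gcongr

theorem norm_bFun_le {m : ℕ} (hm : 1 ≤ m) (δ : ℕ) : ‖bFun m δ‖ ≤ (δ : ℝ) ^ m :=
  calc ‖bFun m δ‖ ≤ ∑ d ∈ δ.divisors, (δ : ℝ) ^ (m - 1) := by
        refine (norm_sum_le _ _).trans (Finset.sum_le_sum fun d hd => ?_)
        rw [norm_mul, norm_pow, Complex.norm_intCast, Complex.norm_natCast]
        exact (mul_le_of_le_one_left (by positivity) (mod_cast abs_moebius_le_one)).trans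
          (pow_le_pow_left₀ d.cast_nonneg (mod_cast Nat.divisor_le hd) _)
    _ = δ.divisors.card * (δ : ℝ) ^ (m - 1) := by rw [Finset.sum_const, nsmul_eq_mul]
    _ ≤ δ * (δ : ℝ) ^ (m - 1) := by gcongr; exact_mod_cast Nat.card_divisors_le_self δ
    _ = (δ : ℝ) ^ m := mul_pow_sub_one (by omega) _

theorem norm_div_natCast_cpow_nat_mul_le {k δ : ℕ} (hk : 2 ≤ k) (hδ : δ ≠ 0) {s : ℂ}
    (hs : 0 ≤ s.re) (z : ℂ) :
    ‖z / (k : ℂ) ^ ((δ : ℂ) * s)‖ ≤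
      (2 : ℝ) ^ s.re * ((2 : ℝ) ^ s.re)⁻¹ ^ δ * ‖z / (k : ℂ) ^ s‖ := by
  obtain ⟨j, rfl⟩ := Nat.exists_eq_succ_of_ne_zero hδ
  have h2k : (2 : ℝ) ^ s.re ≤ (k : ℝ) ^ s.re :=
    Real.rpow_le_rpow zero_le_two (by exact_mod_cast hk) hs
  rw [Complex.cpow_nat_mul, norm_div, norm_div, norm_pow,
    Complex.norm_natCast_cpow_of_pos (by omega)]
  calc ‖z‖ / ((k : ℝ) ^ s.re) ^ (j + 1) = ‖z‖ / (((k : ℝ) ^ s.re) ^ j * (k : ℝ) ^ s.re) := by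
        rw [pow_succ]
    _ ≤ ‖z‖ / (((2 : ℝ) ^ s.re) ^ j * (k : ℝ) ^ s.re) := by gcongr
    _ = _ := by rw [inv_pow, pow_succ]; field_simp

noncomputable def doubleSeriesTerm (m : ℕ) (s : ℂ) (p : ℕ × ℕ) : ℂ :=
  bFun m p.1 * ((Λ p.2 : ℂ) * (Real.log p.2 : ℂ) ^ (m - 1) / (p.2 : ℂ) ^ ((p.1 : ℂ) * s))

theorem summable_norm_doubleSeriesTerm {m : ℕ} (hm : 1 ≤ m) {s : ℂ} (hs : 1 < s.re) :
    Summable fun p => ‖doubleSeriesTerm m s p‖ := by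
  set ρ : ℝ := 2 ^ s.re
  have hρ : ‖ρ⁻¹‖ < 1 := by
    rw [norm_inv, Real.norm_of_nonneg (by positivity)]
    exact inv_lt_one_of_one_lt₀ (Real.one_lt_rpow one_lt_two (by linarith))
  refine Summable.of_nonneg_of_le (fun _ => norm_nonneg _) (fun ⟨δ, k⟩ => ?_)
    ((summable_pow_mul_geometric_of_norm_lt_one m hρ).mul_of_nonneg
      ((summable_norm_vonMangoldt_mul_log_pow_div_cpow (m - 1) hs).mul_left ρ)
      (fun _ => by positivity) (fun _ => by positivity))
  show _ ≤ (δ : ℝ) ^ m * ρ⁻¹ ^ δ * (ρ * _)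
  rcases eq_or_ne δ 0 with rfl | hδ
  · simp only [doubleSeriesTerm, bFun, Nat.divisors_zero, Finset.sum_empty, zero_mul, norm_zero]
    positivity
  rcases lt_or_ge k 2 with hk | hk
  · interval_cases k <;> simp [doubleSeriesTerm]
  calc ‖doubleSeriesTerm m s (δ, k)‖
      ≤ (δ : ℝ) ^ m * (ρ * ρ⁻¹ ^ δ *
          ‖(Λ k : ℂ) * (Real.log k : ℂ) ^ (m - 1) / (k : ℂ) ^ s‖) := by
        rw [doubleSeriesTerm, norm_mul]
        exact mul_le_mul (norm_bFun_le hm δ) (norm_div_natCast_cpow_nat_mul_le hk hδ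
          (by linarith) _) (norm_nonneg _) (by positivity)
    _ = _ := by ring

theorem tsum_fiber_doubleSeriesTerm {m : ℕ} (hm : 1 ≤ m) (s : ℂ) (n : ℕ) :
    ∑' p : (fun p : ℕ × ℕ => p.2 ^ p.1) ⁻¹' {n}, doubleSeriesTerm m s p =
      (Λ n : ℂ) ^ m / (n : ℂ) ^ s := by
  have hterm (p : (fun p : ℕ × ℕ => p.2 ^ p.1) ⁻¹' {n}) : doubleSeriesTerm m s p =
      bFun m p.1.1 * ((Λ p.1.2 : ℂ) * (Real.log p.1.2 : ℂ) ^ (m - 1)) / (n : ℂ) ^ s := by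
    have hp : p.1.2 ^ p.1.1 = n := p.2
    rw [doubleSeriesTerm, Complex.natCast_cpow_natCast_mul, ← Nat.cast_pow, hp]
    ring
  rw [tsum_congr hterm, tsum_div_const, tsum_fiber_pow_eq_vonMangoldt_pow hm]

/-- For `Re s > 1`, `∑ Λ(n)^m / n^s = ∑_δ b_m(δ) G_m(δ s)`, with all series converging
absolutely. -/
theorem stmt_15 (m : ℕ) (hm : 1 ≤ m) (s : ℂ) (hs : 1 < s.re) :
    Summable (fun n : ℕ => ‖(ArithmeticFunction.vonMangoldt n : ℂ) ^ m / (n : ℂ) ^ s‖) ∧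
    (∀ δ : ℕ, 1 ≤ δ → Summable (fun n : ℕ =>
      ‖(ArithmeticFunction.vonMangoldt n : ℂ) * (Real.log n : ℂ) ^ (m - 1) /
        (n : ℂ) ^ ((δ : ℂ) * s)‖)) ∧
    Summable (fun δ : ℕ => ‖bFun m δ * GFun m ((δ : ℂ) * s)‖) ∧
    (∑' n : ℕ, (ArithmeticFunction.vonMangoldt n : ℂ) ^ m / (n : ℂ) ^ s) =
      ∑' δ : ℕ, bFun m δ * GFun m ((δ : ℂ) * s) := by
  have hG (δ : ℕ) (hδ : 1 ≤ δ) := by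
    have hre : 1 < ((δ : ℂ) * s).re := by
      rw [← Complex.ofReal_natCast, Complex.re_ofReal_mul]
      nlinarith [(Nat.one_le_cast.mpr hδ : (1 : ℝ) ≤ δ)]
    exact summable_norm_vonMangoldt_mul_log_pow_div_cpow (m - 1) hre
  have hF := summable_norm_doubleSeriesTerm hm hs
  refine ⟨?_, hG, ?_, ?_⟩
  · exact (summable_norm_vonMangoldt_mul_log_pow_div_cpow (m - 1) hs).of_nonneg_of_le
      (fun _ => norm_nonneg _) (norm_vonMangoldt_pow_div_cpow_le hm s)
  · refine hF.prod.of_nonneg_of_le (fun _ => norm_nonneg _) fun δ => ?_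
    rw [GFun, ← tsum_mul_left]
    exact norm_tsum_le_tsum_norm (hF.prod_factor δ)
  · calc ∑' n : ℕ, (Λ n : ℂ) ^ m / (n : ℂ) ^ s
        = ∑' n : ℕ, ∑' p : (fun p : ℕ × ℕ => p.2 ^ p.1) ⁻¹' {n}, doubleSeriesTerm m s p :=
          tsum_congr fun n => (tsum_fiber_doubleSeriesTerm hm s n).symm
      _ = ∑' p, doubleSeriesTerm m s p := (hF.of_norm.hasSum.tsum_fiberwise _).tsum_eq
      _ = ∑' δ : ℕ, bFun m δ * GFun m ((δ : ℂ) * s) := by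
          rw [hF.of_norm.tsum_prod]
          exact tsum_congr fun δ => tsum_mul_left (a := bFun m δ)
end
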